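/- For any two resolved binary trees of the same length n, there exists a finite sequence of primitive arrows (level interchanges of sibling nodes and edge reattachments) transforming one into the other; equivalently, every RB tree of length n can be brought into the standard left-comb form with node-level sequence 1 0 3 2 5 4 ... (2n-3) (2n-2) (2n-1) read in exploded form. -/

import Mathlib

/-- A planar binary tree in which every node (leaf or internal) carries a level. -/
inductive RTree : Type
  | leaf (lvl : ℕ) : RTree
  | node (lvl : ℕ) (l r : RTree) : RTree

namespace RTree

/-- Left-to-right sequence of the levels of all nodes (infix traversal). -/
def seq : RTree → List ℕ
  | leaf k => [k]
  | node k l r => seq l ++ k :: seq r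

/-- Left-to-right sequence of the levels of the internal (branch) nodes. -/
def branchSeq : RTree → List ℕ
  | leaf _ => []
  | node k l r => branchSeq l ++ k :: branchSeq r

/-- Left-to-right sequence of the leaf levels. -/
def leafSeq : RTree → List ℕ
  | leaf k => [k]
  | node _ l r => leafSeq l ++ leafSeq r

/-- Number of leaves. -/
def leafCount : RTree → ℕ
  | leaf _ => 1
  | node _ l r => leafCount l + leafCount r

/-- Every node lies at a strictly lower level than all nodes of its subtrees. -/
def LevelValid : RTree → Prop
  | leaf _ => True
  | node k l r => (∀ m ∈ seq l, k < m) ∧ (∀ m ∈ seq r, k < m) ∧ LevelValid l ∧ LevelValid r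

/-- A resolved binary tree (RB tree) of length `n`: `n` leaves, the `2n - 1`
nodes carry the distinct levels `0, …, 2n - 2` (so the root is at level `0`),
and every internal node lies below both of its children. -/
def IsRB (n : ℕ) (t : RTree) : Prop :=
  leafCount t = n ∧ (seq t).Perm (List.range (2 * n - 1)) ∧ LevelValid t

/-- The level of the root of a tree. -/
def rootLvl : RTree → ℕ
  | leaf k => k
  | node k _ _ => k

/-- Replace the level of the root. -/
def setLvl (m : ℕ) : RTree → RTree
  | leaf _ => leaf m
  | node _ l r => node m l r

/-- Primitive moves on RB trees: reattachment of an edge about a pivot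
(associativity, both directions) and interchange of the levels of the two
children of a common internal node, applied anywhere in the tree. -/
inductive Move : RTree → RTree → Prop
  | assoc (k l : ℕ) (A B C : RTree) :
      Move (node k (node l A B) C) (node k A (node l B C))
  | assocInv (k l : ℕ) (A B C : RTree) :
      Move (node k A (node l B C)) (node k (node l A B) C)
  | interchange (k : ℕ) (x y : RTree) :
      Move (node k x y) (node k (setLvl (rootLvl y) x) (setLvl (rootLvl x) y))
  | congrL (k : ℕ) {l l' : RTree} (r : RTree) : Move l l' → Move (node k l r) (node k l' r)
  | congrR (k : ℕ) (l : RTree) {r r' : RTree} : Move r r' → Move (node k l r) (node k l r')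

/-- A primitive arrow of the groupoid `RBTree`. -/
def MoveRB (n : ℕ) (s t : RTree) : Prop := Move s t ∧ IsRB n s ∧ IsRB n t

end RTree


namespace RTree

lemma leafCount_pos (t : RTree) : 0 < leafCount t := by
  induction t with
  | leaf k => simp [leafCount]
  | node k l r ihl ihr => simp [leafCount]; omega

lemma seq_ne_nil (t : RTree) : seq t ≠ [] := by
  cases t with
  | leaf k => simp [seq]
  | node k l r => simp [seq]

lemma rootLvl_setLvl (m : ℕ) (t : RTree) : rootLvl (setLvl m t) = m := by
  cases t <;> rfl

lemma setLvl_setLvl (m m' : ℕ) (t : RTree) : setLvl m (setLvl m' t) = setLvl m t := by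
  cases t <;> rfl

lemma setLvl_rootLvl (t : RTree) : setLvl (rootLvl t) t = t := by
  cases t <;> rfl

lemma rootLvl_mem (t : RTree) : rootLvl t ∈ seq t := by
  cases t <;> simp [seq, rootLvl]

/-- levels of the non-root nodes -/
def rest : RTree → List ℕ
  | leaf _ => []
  | node _ l r => seq l ++ seq r

lemma seq_perm_rest (t : RTree) : List.Perm (seq t) (rootLvl t :: rest t) := by
  cases t with
  | leaf k => simp [seq, rootLvl, rest]
  | node k l r => simp [seq, rootLvl, rest]

lemma seq_setLvl_perm (m : ℕ) (t : RTree) : List.Perm (seq (setLvl m t)) (m :: rest t) := by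
  cases t with
  | leaf k => simp [seq, setLvl, rest]
  | node k l r => simp [seq, setLvl, rest]

lemma leafCount_setLvl (m : ℕ) (t : RTree) : leafCount (setLvl m t) = leafCount t := by
  cases t <;> rfl

lemma Move.perm {s t : RTree} (h : Move s t) : List.Perm (seq s) (seq t) := by
  induction h with
  | assoc k l A B C =>
      refine List.perm_iff_count.mpr fun a => ?_
      simp [seq, List.count_append, List.count_cons]
      ring
  | assocInv k l A B C =>
      refine List.perm_iff_count.mpr fun a => ?_
      simp [seq, List.count_append, List.count_cons]
      ring
  | interchange k x y =>
      have h1 : List.Perm (seq (node k x y)) ((rootLvl x :: rest x) ++ k :: (rootLvl y :: rest y)) :=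
        List.Perm.append (seq_perm_rest x) (List.Perm.cons k (seq_perm_rest y))
      have h2 : List.Perm (seq (node k (setLvl (rootLvl y) x) (setLvl (rootLvl x) y)))
          ((rootLvl y :: rest x) ++ k :: (rootLvl x :: rest y)) :=
        List.Perm.append (seq_setLvl_perm _ x) (List.Perm.cons k (seq_setLvl_perm _ y))
      refine h1.trans (List.Perm.trans ?_ h2.symm)
      refine List.perm_iff_count.mpr fun a => ?_
      simp [List.count_append, List.count_cons]
      ring
  | congrL k r h ih => exact ih.append_right _
  | congrR k l h ih => exact (ih.cons k).append_left _

lemma Move.leafCount_eq {s t : RTree} (h : Move s t) : leafCount s = leafCount t := by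
  induction h with
  | assoc k l A B C => simp [leafCount]; omega
  | assocInv k l A B C => simp [leafCount]; omega
  | interchange k x y => simp [leafCount, leafCount_setLvl]
  | congrL k r h ih => simp [leafCount, ih]
  | congrR k l h ih => simp [leafCount, ih]

lemma Move.symm {s t : RTree} (h : Move s t) : Move t s := by
  induction h with
  | assoc k l A B C => exact Move.assocInv k l A B C
  | assocInv k l A B C => exact Move.assoc k l A B C
  | interchange k x y =>
      have h := Move.interchange k (setLvl (rootLvl y) x) (setLvl (rootLvl x) y)
      simpa [rootLvl_setLvl, setLvl_setLvl, setLvl_rootLvl] using h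
  | congrL k r h ih => exact Move.congrL k r ih
  | congrR k l h ih => exact Move.congrR k l ih

lemma valid_root_le {t : RTree} (hv : LevelValid t) : ∀ x ∈ seq t, rootLvl t ≤ x := by
  cases t with
  | leaf k => simp [seq, rootLvl]
  | node k l r =>
      intro x hx
      simp only [rootLvl]
      simp [seq] at hx
      rcases hx with hx | hx | hx
      · exact le_of_lt (hv.1 x hx)
      · omega
      · exact le_of_lt (hv.2.1 x hx)

lemma root_min_eq {s t : RTree} (hvs : LevelValid s) (hvt : LevelValid t)
    (hp : List.Perm (seq s) (seq t)) : rootLvl s = rootLvl t := by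
  have h1 := valid_root_le hvs (rootLvl t) (hp.mem_iff.mpr (rootLvl_mem t))
  have h2 := valid_root_le hvt (rootLvl s) (hp.mem_iff.mp (rootLvl_mem s))
  omega

end RTree

namespace RTree

/-- A validity-preserving move. -/
def MV (s t : RTree) : Prop := Move s t ∧ LevelValid s ∧ LevelValid t

/-- Chains of validity-preserving moves. -/
def RR : RTree → RTree → Prop := Relation.ReflTransGen MV

lemma MV.symm {s t : RTree} (h : MV s t) : MV t s := ⟨h.1.symm, h.2.2, h.2.1⟩

lemma RR.refl {s : RTree} : RR s s := Relation.ReflTransGen.refl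

lemma RR.trans {s t u : RTree} (h1 : RR s t) (h2 : RR t u) : RR s u :=
  Relation.ReflTransGen.trans h1 h2

lemma RR.single {s t : RTree} (h : MV s t) : RR s t := Relation.ReflTransGen.single h

lemma RR.symm {s t : RTree} (h : RR s t) : RR t s :=
  by
    haveI : Std.Symm MV := ⟨fun _ _ hh => MV.symm hh⟩
    exact Relation.ReflTransGen.symmetric.symm _ _ h

lemma RR.perm {s t : RTree} (h : RR s t) : List.Perm (seq s) (seq t) := by
  induction h with
  | refl => exact List.Perm.refl _
  | tail _ hbc ih => exact ih.trans hbc.1.perm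

lemma RR.leafCount_eq {s t : RTree} (h : RR s t) : leafCount s = leafCount t := by
  induction h with
  | refl => rfl
  | tail _ hbc ih => exact ih.trans hbc.1.leafCount_eq

lemma RR.valid {s t : RTree} (h : RR s t) (hs : LevelValid s) : LevelValid t := by
  induction h with
  | refl => exact hs
  | tail _ hbc _ => exact hbc.2.2

lemma MV_congrL {k : ℕ} {l l' r : RTree} (hv : LevelValid (node k l r)) (h : MV l l') :
    MV (node k l r) (node k l' r) := by
  refine ⟨Move.congrL k r h.1, hv, ?_⟩
  exact ⟨fun x hx => hv.1 x (h.1.perm.mem_iff.mpr hx), hv.2.1, h.2.2, hv.2.2.2⟩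

lemma MV_congrR {k : ℕ} {l r r' : RTree} (hv : LevelValid (node k l r)) (h : MV r r') :
    MV (node k l r) (node k l r') := by
  refine ⟨Move.congrR k l h.1, hv, ?_⟩
  exact ⟨hv.1, fun x hx => hv.2.1 x (h.1.perm.mem_iff.mpr hx), hv.2.2.1, h.2.2⟩

lemma RR_congrL {k : ℕ} {l l' : RTree} (r : RTree) (hv : LevelValid (node k l r))
    (h : RR l l') : RR (node k l r) (node k l' r) := by
  induction h with
  | refl => exact RR.refl
  | @tail b c hab hbc ih =>
      have hvb : LevelValid (node k b r) :=
        ⟨fun x hx => hv.1 x ((RR.perm hab).mem_iff.mpr hx), hv.2.1,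
          RR.valid hab hv.2.2.1, hv.2.2.2⟩
      exact RR.trans ih (RR.single (MV_congrL hvb hbc))

lemma RR_congrR {k : ℕ} (l : RTree) {r r' : RTree} (hv : LevelValid (node k l r))
    (h : RR r r') : RR (node k l r) (node k l r') := by
  induction h with
  | refl => exact RR.refl
  | @tail b c hab hbc ih =>
      have hvb : LevelValid (node k l b) :=
        ⟨hv.1, fun x hx => hv.2.1 x ((RR.perm hab).mem_iff.mpr hx),
          hv.2.2.1, RR.valid hab hv.2.2.2⟩
      exact RR.trans ih (RR.single (MV_congrR hvb hbc))

/-- Canonical form: right comb `node k (leaf a) u` with `a` below everything in `u`. -/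
inductive Canon : RTree → Prop
  | leaf (a : ℕ) : Canon (leaf a)
  | node (k a : ℕ) (u : RTree) (hu : Canon u) (ha : ∀ x ∈ seq u, a < x) :
      Canon (node k (leaf a) u)

end RTree

namespace RTree

lemma nodup_parts {k : ℕ} {l r : RTree} (h : (seq (node k l r)).Nodup) :
    (seq l).Nodup ∧ (seq r).Nodup ∧ (∀ x ∈ seq l, ∀ y ∈ seq r, x ≠ y) ∧
      k ∉ seq l ∧ k ∉ seq r := by
  simp only [seq, List.nodup_append, List.nodup_cons, List.disjoint_cons_right] at h
  obtain ⟨h1, ⟨h2, h3⟩, h5⟩ := h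
  exact ⟨h1, h3, fun x hx y hy => h5 x hx y (by simp [hy]), fun hk => h5 k hk k (by simp) rfl, h2⟩

/-- The merge statement at size bound `m`. -/
def MergeStmt (m : ℕ) : Prop :=
  ∀ (k : ℕ) (cl cr : RTree), leafCount (node k cl cr) ≤ m →
    LevelValid (node k cl cr) → (seq (node k cl cr)).Nodup →
    Canon cl → Canon cr → ∃ u, RR (node k cl cr) u ∧ Canon u

lemma finalStep {m : ℕ} (IH : MergeStmt m) (k e c f : ℕ) (F : RTree)
    (hv : LevelValid (node k (leaf e) (node c (leaf f) F)))
    (hnd : (seq (node k (leaf e) (node c (leaf f) F))).Nodup)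
    (hce : c < e) (hfF : ∀ x ∈ seq F, f < x) (hF : Canon F)
    (hsize : leafCount (node k (leaf e) (node c (leaf f) F)) ≤ m + 1) :
    ∃ u, RR (node k (leaf e) (node c (leaf f) F)) u ∧ Canon u := by
  simp only [LevelValid, seq, List.mem_append, List.mem_cons, List.mem_singleton,
    List.not_mem_nil, or_false, forall_eq] at hv
  obtain ⟨hke, hkr, -, hcf, hcF, -, hvF⟩ := hv
  have hkf : k < f := hkr f (by simp [seq])
  have hkc : k < c := hkr c (by simp [seq])
  have hkF : ∀ x ∈ seq F, k < x := fun x hx => hkr x (by simp [seq, hx])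
  have hef : e ≠ f := by
    have h := (nodup_parts hnd).2.2.1 e (by simp [seq]) f (by simp [seq])
    exact h
  rcases Nat.lt_or_ge e f with hlt | hge
  · -- single interchange at the root
    have mv : Move (node k (leaf e) (node c (leaf f) F))
        (node k (leaf c) (node e (leaf f) F)) :=
      Move.interchange k (leaf e) (node c (leaf f) F)
    have hv1 : LevelValid (node k (leaf e) (node c (leaf f) F)) := by
      refine ⟨by simp [seq]; omega, ?_, trivial, by exact ⟨by simp [seq]; omega,
        fun x hx => hcF x hx, trivial, hvF⟩⟩
      intro x hx
      simp [seq] at hx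
      rcases hx with rfl | rfl | hx
      · omega
      · omega
      · exact hkF x hx
    have hv2 : LevelValid (node k (leaf c) (node e (leaf f) F)) := by
      refine ⟨by simp [seq]; omega, ?_, trivial,
        ⟨by simp [seq]; omega, fun x hx => lt_trans hlt (hfF x hx), trivial, hvF⟩⟩
      intro x hx
      simp [seq] at hx
      rcases hx with rfl | rfl | hx
      · omega
      · omega
      · exact hkF x hx
    refine ⟨node k (leaf c) (node e (leaf f) F), RR.single ⟨mv, hv1, hv2⟩, ?_⟩
    refine Canon.node k c _ (Canon.node e f F hF hfF) ?_
    intro x hx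
    simp [seq] at hx
    rcases hx with rfl | rfl | hx
    · omega
    · omega
    · exact lt_trans hcf (hfF x hx)
  · have hfe : f < e := by omega
    -- four moves, then recurse
    have hv0 : LevelValid (node k (leaf e) (node c (leaf f) F)) := by
      refine ⟨by simp [seq]; omega, ?_, trivial,
        ⟨by simp [seq]; omega, fun x hx => hcF x hx, trivial, hvF⟩⟩
      intro x hx
      simp [seq] at hx
      rcases hx with rfl | rfl | hx
      · omega
      · omega
      · exact hkF x hx
    have hv1 : LevelValid (node k (node c (leaf e) (leaf f)) F) := by
      refine ⟨?_, fun x hx => hkF x hx, ⟨by simp [seq]; omega, by simp [seq]; omega,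
        trivial, trivial⟩, hvF⟩
      intro x hx
      simp [seq] at hx
      rcases hx with rfl | rfl | rfl <;> omega
    have hv2 : LevelValid (node k (node c (leaf f) (leaf e)) F) := by
      refine ⟨?_, fun x hx => hkF x hx, ⟨by simp [seq]; omega, by simp [seq]; omega,
        trivial, trivial⟩, hvF⟩
      intro x hx
      simp [seq] at hx
      rcases hx with rfl | rfl | rfl <;> omega
    have hv3 : LevelValid (node k (leaf f) (node c (leaf e) F)) := by
      refine ⟨by simp [seq]; omega, ?_, trivial,
        ⟨by simp [seq]; omega, fun x hx => hcF x hx, trivial, hvF⟩⟩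
      intro x hx
      simp [seq] at hx
      rcases hx with rfl | rfl | hx
      · omega
      · omega
      · exact hkF x hx
    have hv4 : LevelValid (node k (leaf c) (node f (leaf e) F)) := by
      refine ⟨by simp [seq]; omega, ?_, trivial,
        ⟨by simp [seq]; omega, fun x hx => hfF x hx, trivial, hvF⟩⟩
      intro x hx
      simp [seq] at hx
      rcases hx with rfl | rfl | hx
      · omega
      · omega
      · exact hkF x hx
    have m1 : MV (node k (leaf e) (node c (leaf f) F)) (node k (node c (leaf e) (leaf f)) F) :=
      ⟨Move.assocInv k c (leaf e) (leaf f) F, hv0, hv1⟩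
    have m2 : MV (node k (node c (leaf e) (leaf f)) F) (node k (node c (leaf f) (leaf e)) F) :=
      ⟨Move.congrL k F (Move.interchange c (leaf e) (leaf f)), hv1, hv2⟩
    have m3 : MV (node k (node c (leaf f) (leaf e)) F) (node k (leaf f) (node c (leaf e) F)) :=
      ⟨Move.assoc k c (leaf f) (leaf e) F, hv2, hv3⟩
    have m4 : MV (node k (leaf f) (node c (leaf e) F)) (node k (leaf c) (node f (leaf e) F)) :=
      ⟨Move.interchange k (leaf f) (node c (leaf e) F), hv3, hv4⟩
    have chain : RR (node k (leaf e) (node c (leaf f) F)) (node k (leaf c) (node f (leaf e) F)) :=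
      RR.trans (RR.trans (RR.trans (RR.single m1) (RR.single m2)) (RR.single m3))
        (RR.single m4)
    -- recurse on the right subtree
    have hndc : (seq (node k (leaf c) (node f (leaf e) F))).Nodup :=
      (RR.perm chain).nodup_iff.mp hnd
    have hndin : (seq (node f (leaf e) F)).Nodup := (nodup_parts hndc).2.1
    have hvin : LevelValid (node f (leaf e) F) :=
      ⟨by simp [seq]; omega, fun x hx => hfF x hx, trivial, hvF⟩
    have hszin : leafCount (node f (leaf e) F) ≤ m := by
      simp only [leafCount] at hsize ⊢
      omega
    obtain ⟨w, hw, hcw⟩ := IH f (leaf e) F hszin hvin hndin (Canon.leaf e) hF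
    have lift : RR (node k (leaf c) (node f (leaf e) F)) (node k (leaf c) w) :=
      RR_congrR (leaf c) hv4 hw
    refine ⟨node k (leaf c) w, RR.trans chain lift, ?_⟩
    refine Canon.node k c w hcw ?_
    intro x hx
    have hx' : x ∈ seq (node f (leaf e) F) := (RR.perm hw).symm.mem_iff.mp hx
    simp [seq] at hx'
    rcases hx' with rfl | rfl | hx'
    · omega
    · omega
    · exact lt_trans hcf (hfF x hx')

end RTree

namespace RTree

lemma tailMerge {m : ℕ} (IH : MergeStmt m) (k e c : ℕ) (rl rr : RTree)
    (hv : LevelValid (node k (leaf e) (node c rl rr)))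
    (hnd : (seq (node k (leaf e) (node c rl rr))).Nodup)
    (hce : c < e) (hcrl : Canon rl) (hcrr : Canon rr)
    (hsize : leafCount (node k (leaf e) (node c rl rr)) ≤ m + 1) :
    ∃ u, RR (node k (leaf e) (node c rl rr)) u ∧ Canon u := by
  have hvin : LevelValid (node c rl rr) := hv.2.2.2
  have hndin : (seq (node c rl rr)).Nodup := (nodup_parts hnd).2.1
  have hszin : leafCount (node c rl rr) ≤ m := by
    simp only [leafCount] at hsize ⊢
    omega
  obtain ⟨w, hw, hcw⟩ := IH c rl rr hszin hvin hndin hcrl hcrr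
  have hvw : LevelValid w := RR.valid hw hvin
  have hlc : leafCount w = leafCount (node c rl rr) := (RR.leafCount_eq hw).symm
  -- w is a node, of canonical shape
  cases hcw with
  | leaf a =>
      exfalso
      have h1 := leafCount_pos rl
      have h2 := leafCount_pos rr
      simp [leafCount] at hlc
      omega
  | node c' f F hF hfF =>
      have hroot : c = c' := by
        have := root_min_eq hvw hvin (RR.perm hw).symm
        simp [rootLvl] at this
        omega
      subst hroot
      have lift : RR (node k (leaf e) (node c rl rr)) (node k (leaf e) (node c (leaf f) F)) :=
        RR_congrR (leaf e) hv hw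
      have hv' : LevelValid (node k (leaf e) (node c (leaf f) F)) := RR.valid lift hv
      have hnd' : (seq (node k (leaf e) (node c (leaf f) F))).Nodup :=
        (RR.perm lift).nodup_iff.mp hnd
      have hsz' : leafCount (node k (leaf e) (node c (leaf f) F)) ≤ m + 1 := by
        have := RR.leafCount_eq lift
        omega
      obtain ⟨u, hu, hcu⟩ := finalStep IH k e c f F hv' hnd' hce hfF hF hsz'
      exact ⟨u, RR.trans lift hu, hcu⟩

end RTree

namespace RTree

lemma mergeStmt : ∀ m, MergeStmt m := by
  intro m
  induction m with
  | zero =>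
      intro k cl cr hsz _ _ _ _
      exfalso
      have h1 := leafCount_pos cl
      have h2 := leafCount_pos cr
      simp [leafCount] at hsz
      omega
  | succ m IH =>
      intro k cl cr hsz hv hnd hcl hcr
      have hvl : ∀ x ∈ seq cl, k < x := hv.1
      have hvr : ∀ x ∈ seq cr, k < x := hv.2.1
      have hvcl : LevelValid cl := hv.2.2.1
      have hvcr : LevelValid cr := hv.2.2.2
      cases hcl with
      | leaf b =>
          cases hcr with
          | leaf c =>
              have hbc : b ≠ c :=
                (nodup_parts hnd).2.2.1 b (by simp [seq]) c (by simp [seq])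
              have hkb : k < b := hvl b (by simp [seq])
              have hkc : k < c := hvr c (by simp [seq])
              rcases Nat.lt_or_ge b c with hlt | hge
              · exact ⟨node k (leaf b) (leaf c), RR.refl,
                  Canon.node k b (leaf c) (Canon.leaf c) (by simp [seq]; omega)⟩
              · have hcb : c < b := by omega
                have mv : Move (node k (leaf b) (leaf c)) (node k (leaf c) (leaf b)) :=
                  Move.interchange k (leaf b) (leaf c)
                have hv1 : LevelValid (node k (leaf c) (leaf b)) :=
                  ⟨by simp [seq]; omega, by simp [seq]; omega, trivial, trivial⟩
                exact ⟨node k (leaf c) (leaf b), RR.single ⟨mv, hv, hv1⟩,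
                  Canon.node k c (leaf b) (Canon.leaf b) (by simp [seq]; omega)⟩
          | node c0 c1 Dr hDr hc1 =>
              have hbc0 : b ≠ c0 :=
                (nodup_parts hnd).2.2.1 b (by simp [seq]) c0 (by simp [seq])
              have hc0c1 : c0 < c1 := hvcr.1 c1 (by simp [seq])
              have hc0Dr : ∀ x ∈ seq Dr, c0 < x := hvcr.2.1
              rcases Nat.lt_or_ge b c0 with hlt | hge
              · refine ⟨node k (leaf b) (node c0 (leaf c1) Dr), RR.refl,
                  Canon.node k b _ (Canon.node c0 c1 Dr hDr hc1) ?_⟩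
                intro x hx
                simp [seq] at hx
                rcases hx with rfl | rfl | hx
                · omega
                · omega
                · have := hc0Dr x hx; omega
              · have hc0b : c0 < b := by omega
                exact tailMerge IH k b c0 (leaf c1) Dr hv hnd hc0b (Canon.leaf c1) hDr hsz
      | node b0 b1 Dl hDl hb1 =>
          have hb0b1 : b0 < b1 := hvcl.1 b1 (by simp [seq])
          have hb0Dl : ∀ x ∈ seq Dl, b0 < x := hvcl.2.1
          have hvDl : LevelValid Dl := hvcl.2.2.2
          have hkb1 : k < b1 := hvl b1 (by simp [seq])
          have hkb0 : k < b0 := hvl b0 (by simp [seq])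
          have hkDl : ∀ x ∈ seq Dl, k < x := fun x hx => hvl x (by simp [seq]; tauto)
          cases hcr with
          | leaf c0 =>
              have hb0c0 : b0 ≠ c0 :=
                (nodup_parts hnd).2.2.1 b0 (by simp [seq]) c0 (by simp [seq])
              have hkc0 : k < c0 := hvr c0 (by simp [seq])
              rcases Nat.lt_or_ge b0 c0 with hlt | hge
              · -- assoc then tailMerge
                have mv : Move (node k (node b0 (leaf b1) Dl) (leaf c0))
                    (node k (leaf b1) (node b0 Dl (leaf c0))) :=
                  Move.assoc k b0 (leaf b1) Dl (leaf c0)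
                have hv1 : LevelValid (node k (leaf b1) (node b0 Dl (leaf c0))) := by
                  refine ⟨by simp [seq]; omega, ?_, trivial,
                    ⟨hb0Dl, by simp [seq]; omega, hvDl, trivial⟩⟩
                  intro x hx
                  simp [seq] at hx
                  rcases hx with hx | rfl | rfl
                  · exact hkDl x hx
                  · omega
                  · omega
                have step : RR (node k (node b0 (leaf b1) Dl) (leaf c0))
                    (node k (leaf b1) (node b0 Dl (leaf c0))) := RR.single ⟨mv, hv, hv1⟩
                have hnd1 := (Move.perm mv).nodup_iff.mp hnd
                have hsz1 : leafCount (node k (leaf b1) (node b0 Dl (leaf c0))) ≤ m + 1 := by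
                  have := Move.leafCount_eq mv
                  omega
                obtain ⟨u, hu, hcu⟩ := tailMerge IH k b1 b0 Dl (leaf c0) hv1 hnd1 hb0b1
                  hDl (Canon.leaf c0) hsz1
                exact ⟨u, RR.trans step hu, hcu⟩
              · have hc0b0 : c0 < b0 := by omega
                have mv1 : Move (node k (node b0 (leaf b1) Dl) (leaf c0))
                    (node k (node c0 (leaf b1) Dl) (leaf b0)) :=
                  Move.interchange k (node b0 (leaf b1) Dl) (leaf c0)
                have hv1 : LevelValid (node k (node c0 (leaf b1) Dl) (leaf b0)) := by
                  refine ⟨?_, by simp [seq]; omega,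
                    ⟨by simp [seq]; omega, fun x hx => by have := hb0Dl x hx; omega,
                      trivial, hvDl⟩, trivial⟩
                  intro x hx
                  simp [seq] at hx
                  rcases hx with rfl | rfl | hx
                  · omega
                  · omega
                  · exact hkDl x hx
                have mv2 : Move (node k (node c0 (leaf b1) Dl) (leaf b0))
                    (node k (leaf b1) (node c0 Dl (leaf b0))) :=
                  Move.assoc k c0 (leaf b1) Dl (leaf b0)
                have hv2 : LevelValid (node k (leaf b1) (node c0 Dl (leaf b0))) := by
                  refine ⟨by simp [seq]; omega, ?_, trivial,
                    ⟨fun x hx => by have := hb0Dl x hx; omega, by simp [seq]; omega,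
                      hvDl, trivial⟩⟩
                  intro x hx
                  simp [seq] at hx
                  rcases hx with hx | rfl | rfl
                  · exact hkDl x hx
                  · omega
                  · omega
                have chain : RR (node k (node b0 (leaf b1) Dl) (leaf c0))
                    (node k (leaf b1) (node c0 Dl (leaf b0))) :=
                  RR.trans (RR.single ⟨mv1, hv, hv1⟩) (RR.single ⟨mv2, hv1, hv2⟩)
                have hnd2 := (RR.perm chain).nodup_iff.mp hnd
                have hsz2 : leafCount (node k (leaf b1) (node c0 Dl (leaf b0))) ≤ m + 1 := by
                  have := RR.leafCount_eq chain
                  omega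
                obtain ⟨u, hu, hcu⟩ := tailMerge IH k b1 c0 Dl (leaf b0) hv2 hnd2
                  (by omega) hDl (Canon.leaf b0) hsz2
                exact ⟨u, RR.trans chain hu, hcu⟩
          | node c0 c1 Dr hDr hc1 =>
              have hb0c0 : b0 ≠ c0 :=
                (nodup_parts hnd).2.2.1 b0 (by simp [seq]) c0 (by simp [seq])
              have hc0c1 : c0 < c1 := hvcr.1 c1 (by simp [seq])
              have hc0Dr : ∀ x ∈ seq Dr, c0 < x := hvcr.2.1
              have hvDr : LevelValid Dr := hvcr.2.2.2
              have hkcr : ∀ x ∈ seq (node c0 (leaf c1) Dr), k < x := hvr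
              rcases Nat.lt_or_ge b0 c0 with hlt | hge
              · -- assoc then tailMerge
                have mv : Move (node k (node b0 (leaf b1) Dl) (node c0 (leaf c1) Dr))
                    (node k (leaf b1) (node b0 Dl (node c0 (leaf c1) Dr))) :=
                  Move.assoc k b0 (leaf b1) Dl (node c0 (leaf c1) Dr)
                have hb0cr : ∀ x ∈ seq (node c0 (leaf c1) Dr), b0 < x := by
                  intro x hx
                  have := valid_root_le hvcr x hx
                  simp [rootLvl] at this
                  omega
                have hv1 : LevelValid (node k (leaf b1)
                    (node b0 Dl (node c0 (leaf c1) Dr))) := by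
                  refine ⟨by simp [seq]; omega, ?_, trivial,
                    ⟨hb0Dl, hb0cr, hvDl, hvcr⟩⟩
                  intro x hx
                  simp only [seq, List.mem_append, List.mem_cons] at hx
                  rcases hx with hx | rfl | hx
                  · exact hkDl x hx
                  · omega
                  · exact hkcr x (by simpa [seq] using hx)
                have step : RR (node k (node b0 (leaf b1) Dl) (node c0 (leaf c1) Dr))
                    (node k (leaf b1) (node b0 Dl (node c0 (leaf c1) Dr))) :=
                  RR.single ⟨mv, hv, hv1⟩
                have hnd1 := (Move.perm mv).nodup_iff.mp hnd
                have hsz1 : leafCount (node k (leaf b1)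
                    (node b0 Dl (node c0 (leaf c1) Dr))) ≤ m + 1 := by
                  have := Move.leafCount_eq mv
                  omega
                obtain ⟨u, hu, hcu⟩ := tailMerge IH k b1 b0 Dl (node c0 (leaf c1) Dr)
                  hv1 hnd1 hb0b1 hDl (Canon.node c0 c1 Dr hDr hc1) hsz1
                exact ⟨u, RR.trans step hu, hcu⟩
              · have hc0b0 : c0 < b0 := by omega
                have hc0cl : ∀ x ∈ seq (node b0 (leaf b1) Dl), c0 < x := by
                  intro x hx
                  have := valid_root_le hvcl x hx
                  simp [rootLvl] at this
                  omega
                have mv1 : Move (node k (node b0 (leaf b1) Dl) (node c0 (leaf c1) Dr))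
                    (node k (node c0 (node b0 (leaf b1) Dl) (leaf c1)) Dr) :=
                  Move.assocInv k c0 (node b0 (leaf b1) Dl) (leaf c1) Dr
                have hkDr : ∀ x ∈ seq Dr, k < x := fun x hx => hkcr x (by simp [seq]; tauto)
                have hv1 : LevelValid (node k (node c0 (node b0 (leaf b1) Dl) (leaf c1)) Dr) := by
                  refine ⟨?_, hkDr, ⟨hc0cl, by simp [seq]; omega, hvcl, trivial⟩, hvDr⟩
                  intro z hz
                  simp only [seq, List.mem_append, List.mem_cons, List.mem_singleton,
                    List.not_mem_nil, or_false, List.singleton_append] at hz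
                  rcases hz with hz | hz | hz
                  · exact hvl z (by simpa [seq] using hz)
                  · have := hkcr c0 (by simp [seq]); omega
                  · have := hkcr c1 (by simp [seq]); omega
                have step1 : RR (node k (node b0 (leaf b1) Dl) (node c0 (leaf c1) Dr))
                    (node k (node c0 (node b0 (leaf b1) Dl) (leaf c1)) Dr) :=
                  RR.single ⟨mv1, hv, hv1⟩
                have hnd1 := (Move.perm mv1).nodup_iff.mp hnd
                have hvin : LevelValid (node c0 (node b0 (leaf b1) Dl) (leaf c1)) := hv1.2.2.1
                have hndin : (seq (node c0 (node b0 (leaf b1) Dl) (leaf c1))).Nodup :=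
                  (nodup_parts hnd1).1
                have hszin : leafCount (node c0 (node b0 (leaf b1) Dl) (leaf c1)) ≤ m := by
                  have hp := leafCount_pos Dr
                  simp only [leafCount] at hsz ⊢
                  omega
                obtain ⟨w, hw, hcw⟩ := IH c0 (node b0 (leaf b1) Dl) (leaf c1) hszin hvin hndin
                  (Canon.node b0 b1 Dl hDl hb1) (Canon.leaf c1)
                have hvw : LevelValid w := RR.valid hw hvin
                have hlcw : leafCount w = leafCount (node c0 (node b0 (leaf b1) Dl) (leaf c1)) :=
                  (RR.leafCount_eq hw).symm
                cases hcw with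
                | leaf a =>
                    exfalso
                    have := leafCount_pos Dl
                    simp only [leafCount] at hlcw
                    omega
                | node c' e E hE heE =>
                    have hroot : c0 = c' := by
                      have := root_min_eq hvw hvin (RR.perm hw).symm
                      simp [rootLvl] at this
                      omega
                    subst hroot
                    have lift : RR (node k (node c0 (node b0 (leaf b1) Dl) (leaf c1)) Dr)
                        (node k (node c0 (leaf e) E) Dr) := RR_congrL Dr hv1 hw
                    have hv2 : LevelValid (node k (node c0 (leaf e) E) Dr) :=
                      RR.valid lift hv1
                    have hc0e : c0 < e := hvw.1 e (by simp [seq])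
                    have hc0E : ∀ x ∈ seq E, c0 < x := hvw.2.1
                    have hvE : LevelValid E := hvw.2.2.2
                    have mv3 : Move (node k (node c0 (leaf e) E) Dr)
                        (node k (leaf e) (node c0 E Dr)) :=
                      Move.assoc k c0 (leaf e) E Dr
                    have hkw : ∀ x ∈ seq (node c0 (leaf e) E), k < x := hv2.1
                    have hv3 : LevelValid (node k (leaf e) (node c0 E Dr)) := by
                      refine ⟨by have := hkw e (by simp [seq]); simp [seq]; omega, ?_,
                        trivial, ⟨hc0E, hc0Dr, hvE, hvDr⟩⟩
                      intro z hz
                      simp only [seq, List.mem_append, List.mem_cons] at hz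
                      rcases hz with hz | hz | hz
                      · exact hkw z (by simp [seq]; tauto)
                      · have := hkw c0 (by simp [seq]); omega
                      · exact hkDr z hz
                    have step3 : RR (node k (node c0 (leaf e) E) Dr)
                        (node k (leaf e) (node c0 E Dr)) := RR.single ⟨mv3, hv2, hv3⟩
                    have chain : RR (node k (node b0 (leaf b1) Dl) (node c0 (leaf c1) Dr))
                        (node k (leaf e) (node c0 E Dr)) :=
                      RR.trans (RR.trans step1 lift) step3
                    have hnd3 := (RR.perm chain).nodup_iff.mp hnd
                    have hsz3 : leafCount (node k (leaf e) (node c0 E Dr)) ≤ m + 1 := by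
                      have := RR.leafCount_eq chain
                      omega
                    obtain ⟨u, hu, hcu⟩ := tailMerge IH k e c0 E Dr hv3 hnd3 hc0e hE hDr hsz3
                    exact ⟨u, RR.trans chain hu, hcu⟩

end RTree

namespace RTree

lemma toCanon : ∀ t : RTree, LevelValid t → (seq t).Nodup → ∃ u, RR t u ∧ Canon u := by
  intro t
  induction t with
  | leaf k => exact fun _ _ => ⟨leaf k, RR.refl, Canon.leaf k⟩
  | node k l r ihl ihr =>
      intro hv hnd
      obtain ⟨cl, hl, hccl⟩ := ihl hv.2.2.1 (nodup_parts hnd).1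
      obtain ⟨cr, hr, hccr⟩ := ihr hv.2.2.2 (nodup_parts hnd).2.1
      have lift1 : RR (node k l r) (node k cl r) := RR_congrL r hv hl
      have hv1 : LevelValid (node k cl r) := RR.valid lift1 hv
      have lift2 : RR (node k cl r) (node k cl cr) := RR_congrR cl hv1 hr
      have chain : RR (node k l r) (node k cl cr) := RR.trans lift1 lift2
      have hv2 : LevelValid (node k cl cr) := RR.valid chain hv
      have hnd2 : (seq (node k cl cr)).Nodup := (RR.perm chain).nodup_iff.mp hnd
      obtain ⟨u, hu, hcu⟩ := mergeStmt (leafCount (node k cl cr)) k cl cr le_rfl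
        hv2 hnd2 hccl hccr
      exact ⟨u, RR.trans chain hu, hcu⟩

lemma canonEq : ∀ s : RTree, Canon s → ∀ t : RTree, Canon t → LevelValid s →
    LevelValid t → List.Perm (seq s) (seq t) → s = t := by
  intro s hcs
  induction hcs with
  | leaf a =>
      intro t hct hvs hvt hp
      cases hct with
      | leaf b =>
          have : a = b := by simpa [seq] using hp
          rw [this]
      | node k' b v hv' hb' =>
          exfalso
          have hlen := hp.length_eq
          have hpos : 0 < (seq v).length := List.length_pos_iff.mpr (seq_ne_nil v)
          simp [seq] at hlen
  | node k a u hcu ha ih =>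
      intro t hct hvs hvt hp
      cases hct with
      | leaf b =>
          exfalso
          have hlen := hp.length_eq
          have hpos : 0 < (seq u).length := List.length_pos_iff.mpr (seq_ne_nil u)
          simp [seq] at hlen
      | node k' b v hv' hb' =>
          have hk : k = k' := by
            have := root_min_eq hvs hvt hp
            simpa [rootLvl] using this
          subst hk
          have hka : k < a := hvs.1 a (by simp [seq])
          have hkb : k < b := hvt.1 b (by simp [seq])
          have hab : a = b := by
            have hbmem : b ∈ seq (node k (leaf a) u) := hp.mem_iff.mpr (by simp [seq])
            have hamem : a ∈ seq (node k (leaf b) v) := hp.mem_iff.mp (by simp [seq])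
            simp [seq] at hbmem hamem
            rcases hbmem with hb1 | hb1 | hb1
            · omega
            · omega
            · rcases hamem with ha1 | ha1 | ha1
              · omega
              · omega
              · have h1 := ha b hb1
                have h2 := hb' a ha1
                omega
          subst hab
          have hpuv : List.Perm (seq u) (seq v) := by
            have hp' : List.Perm (a :: k :: seq u) (a :: k :: seq v) := by
              simpa [seq] using hp
            exact (hp'.cons_inv).cons_inv
          have : u = v := ih v hv' hvs.2.2.2 hvt.2.2.2 hpuv
          rw [this]

lemma RR_isRB {n : ℕ} {s t : RTree} (h : RR s t) (hs : IsRB n s) : IsRB n t :=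
  ⟨(RR.leafCount_eq h).symm.trans hs.1, (RR.perm h).symm.trans hs.2.1, RR.valid h hs.2.2⟩

lemma RR_to_moveRB {n : ℕ} {s t : RTree} (h : RR s t) (hs : IsRB n s) :
    Relation.ReflTransGen (MoveRB n) s t := by
  induction h with
  | refl => exact Relation.ReflTransGen.refl
  | @tail b c hab hbc ih =>
      have hb : IsRB n b := RR_isRB hab hs
      have hc : IsRB n c := RR_isRB (RR.trans hab (RR.single hbc)) hs
      exact Relation.ReflTransGen.tail ih ⟨hbc.1, hb, hc⟩

end RTree

/-- Any two resolved binary trees of length `n` are connected by a finite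
sequence of primitive arrows (sibling level interchanges and edge
reattachments); in particular every RB tree can be brought into the standard
left-comb form. -/
theorem rb_connected (n : ℕ) (s t : RTree)
    (hs : RTree.IsRB n s) (ht : RTree.IsRB n t) :
    Relation.ReflTransGen (RTree.MoveRB n) s t := by
  open RTree in
  obtain ⟨hls, hps, hvs⟩ := hs
  obtain ⟨hlt, hpt, hvt⟩ := ht
  have hnds : (RTree.seq s).Nodup := hps.nodup_iff.mpr List.nodup_range
  have hndt : (RTree.seq t).Nodup := hpt.nodup_iff.mpr List.nodup_range
  obtain ⟨us, hus, hcus⟩ := RTree.toCanon s hvs hnds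
  obtain ⟨ut, hut, hcut⟩ := RTree.toCanon t hvt hndt
  have hperm : List.Perm (RTree.seq us) (RTree.seq ut) :=
    (RTree.RR.perm hus).symm.trans (hps.trans (hpt.symm.trans (RTree.RR.perm hut)))
  have heq : us = ut := RTree.canonEq us hcus ut hcut (RTree.RR.valid hus hvs)
    (RTree.RR.valid hut hvt) hperm
  have h2 : RTree.RR us t := by rw [heq]; exact RTree.RR.symm hut
  exact RTree.RR_to_moveRB (RTree.RR.trans hus h2) ⟨hls, hps, hvs⟩
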